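/- Let k be a field and (A,C)_ψ an entwining structure with C finite dimensional. There exists e ∈ C with C* ⇀ e = C and ψ(e⊗a) = a⊗e for all a, if and only if there exists e ∈ C with e ↼ C* = C and ψ(e⊗a) = a⊗e for all a. (Here ξ ⇀ c = c₍₁₎⟨c₍₂₎,ξ⟩ and c ↼ ξ = ⟨c₍₁₎,ξ⟩c₍₂₎.) -/

import Mathlib

open TensorProduct LinearMap

noncomputable section

variable (k A C : Type*) [CommRing k] [Ring A] [Algebra k A]
  [AddCommGroup C] [Module k C] [Coalgebra k C]

/-- An entwining structure `(A,C)_ψ` over `k`. -/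
structure Entwining where
  psi : C ⊗[k] A →ₗ[k] A ⊗[k] C
  mul_compat :
    psi ∘ₗ lTensor C (LinearMap.mul' k A)
      = rTensor C (LinearMap.mul' k A)
        ∘ₗ (TensorProduct.assoc k A A C).symm.toLinearMap
        ∘ₗ lTensor A psi
        ∘ₗ (TensorProduct.assoc k A C A).toLinearMap
        ∘ₗ rTensor A psi
        ∘ₗ (TensorProduct.assoc k C A A).symm.toLinearMap
  one_compat : ∀ c : C, psi (c ⊗ₜ[k] (1 : A)) = (1 : A) ⊗ₜ[k] c
  comul_compat :
    lTensor A (Coalgebra.comul (R := k) (A := C)) ∘ₗ psi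
      = (TensorProduct.assoc k A C C).toLinearMap
        ∘ₗ rTensor C psi
        ∘ₗ (TensorProduct.assoc k C A C).symm.toLinearMap
        ∘ₗ lTensor C psi
        ∘ₗ (TensorProduct.assoc k C C A).toLinearMap
        ∘ₗ rTensor A (Coalgebra.comul (R := k) (A := C))
  counit_compat : ∀ (c : C) (a : A),
    (TensorProduct.rid k A)
        ((lTensor A (Coalgebra.counit (R := k) (A := C))) (psi (c ⊗ₜ[k] a)))
      = Coalgebra.counit (R := k) c • a

variable {k A C} in
/-- Evaluation of the first (dual) factor at `c`: `ξ ⊗ a ↦ ξ(c) • a`. -/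
def evFst (c : C) : Module.Dual k C ⊗[k] A →ₗ[k] A :=
  TensorProduct.lift ((LinearMap.lsmul k A) ∘ₗ
    (LinearMap.applyₗ (R := k) c : (C →ₗ[k] k) →ₗ[k] k))

variable {k A C} in
/-- Evaluation of the second (coalgebra) factor against `ξ`: `a ⊗ c ↦ ξ(c) • a`. -/
def evSnd (ξ : Module.Dual k C) : A ⊗[k] C →ₗ[k] A :=
  (TensorProduct.rid k A).toLinearMap ∘ₗ lTensor A ξ

variable {k A C} in
/-- `ψ̄ : A ⊗ C* → C* ⊗ A` is a factorisation map for the entwining `ψ`: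
`⟨c^α, ξ⟩ a_α = ξ_i(c) a^i`. -/
def IsFactorisation (E : Entwining k A C)
    (ψbar : A ⊗[k] Module.Dual k C →ₗ[k] Module.Dual k C ⊗[k] A) : Prop :=
  ∀ (a : A) (ξ : Module.Dual k C) (c : C),
    evFst c (ψbar (a ⊗ₜ[k] ξ)) = evSnd ξ (E.psi (c ⊗ₜ[k] a))

/-- The product of `B = C^{*op}`, i.e. the opposite convolution product:
`⟨c, b b'⟩ = ⟨c₍₂₎, b⟩ ⟨c₍₁₎, b'⟩`, as a linear map `B ⊗ B →ₗ B`. -/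
def opConv : Module.Dual k C ⊗[k] Module.Dual k C →ₗ[k] Module.Dual k C :=
  ((LinearMap.llcomp k C (C ⊗[k] C) k).flip (Coalgebra.comul (R := k) (A := C)))
  ∘ₗ (LinearMap.llcomp k (C ⊗[k] C) (k ⊗[k] k) k (LinearMap.mul' k k))
  ∘ₗ TensorProduct.homTensorHomMap (RingHom.id k) C C k k
  ∘ₗ (TensorProduct.comm k (Module.Dual k C) (Module.Dual k C)).toLinearMap

variable {k A C} in
/-- The multiplication of the smash product `B #_ψ̄ A` on `B ⊗ A`, `B = C^{*op}`:
`(b ⊗ a)(b' ⊗ a') = b ψ̄(a ⊗ b') a'`. -/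
def smashMul (ψbar : A ⊗[k] Module.Dual k C →ₗ[k] Module.Dual k C ⊗[k] A) :
    (Module.Dual k C ⊗[k] A) ⊗[k] (Module.Dual k C ⊗[k] A) →ₗ[k]
      Module.Dual k C ⊗[k] A :=
  rTensor A (opConv k C)
  ∘ₗ (TensorProduct.assoc k (Module.Dual k C) (Module.Dual k C) A).symm.toLinearMap
  ∘ₗ lTensor (Module.Dual k C) (lTensor (Module.Dual k C) (LinearMap.mul' k A))
  ∘ₗ lTensor (Module.Dual k C) (TensorProduct.assoc k (Module.Dual k C) A A).toLinearMap
  ∘ₗ lTensor (Module.Dual k C) (rTensor A ψbar)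
  ∘ₗ lTensor (Module.Dual k C) (TensorProduct.assoc k A (Module.Dual k C) A).symm.toLinearMap
  ∘ₗ (TensorProduct.assoc k (Module.Dual k C) A (Module.Dual k C ⊗[k] A)).toLinearMap

/-- The unit `ε ⊗ 1_A` of the smash product. -/
def smashOne : Module.Dual k C ⊗[k] A :=
  (Coalgebra.counit (R := k) (A := C)) ⊗ₜ[k] (1 : A)

variable {k C} in
/-- `φ_e : C* → C`, `ξ ↦ ξ ⇀ e = e₍₁₎ ⟨e₍₂₎, ξ⟩`. -/
def phiMap (e : C) : Module.Dual k C →ₗ[k] C :=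
  (((LinearMap.llcomp k (C ⊗[k] C) (C ⊗[k] k) C
      (TensorProduct.rid k C).toLinearMap)
    ∘ₗ (LinearMap.lTensorHom C)).flip) (Coalgebra.comul (R := k) e)

variable {k C} in
/-- `ξ ↦ e ↼ ξ = ⟨e₍₁₎, ξ⟩ e₍₂₎`. -/
def rarrowMap (e : C) : Module.Dual k C →ₗ[k] C :=
  (((LinearMap.llcomp k (C ⊗[k] C) (k ⊗[k] C) C
      (TensorProduct.lid k C).toLinearMap)
    ∘ₗ (LinearMap.rTensorHom C)).flip) (Coalgebra.comul (R := k) e)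

variable {k C} in
/-- The (standard) convolution product on `C*`: `(ξ ξ')(c) = ξ(c₍₁₎) ξ'(c₍₂₎)`. -/
def conv (ξ ξ' : Module.Dual k C) : Module.Dual k C :=
  (LinearMap.mul' k k) ∘ₗ TensorProduct.map ξ ξ' ∘ₗ Coalgebra.comul (R := k)

variable {k C} in
/-- `coactD` is the right `C`-coaction on `C*` determined by
`ξ₍₀₎ ⟨ξ₍₁₎, ξ'⟩ = ξ' ξ`. -/
def IsDualCoaction (coactD : Module.Dual k C →ₗ[k] Module.Dual k C ⊗[k] C) :
    Prop :=
  ∀ ξ ξ' : Module.Dual k C,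
    (TensorProduct.rid k (Module.Dual k C))
        ((lTensor (Module.Dual k C) ξ') (coactD ξ))
      = conv ξ' ξ

/-
The maps `ξ ↦ ξ ⇀ e` and `ξ ↦ e ↼ ξ` are transposes of each other,
`⟨ξ ⇀ e, η⟩ = ⟨e₍₁₎, η⟩⟨e₍₂₎, ξ⟩ = ⟨e ↼ η, ξ⟩`. Hence if one of them is surjective the
other is injective, and since `dim C* = dim C` it is then also surjective. So the two
conditions on `e` agree for each single `e`.
-/

variable {k C} in
theorem apply_phiMap_eq_apply_rarrowMap (e : C) (ξ η : Module.Dual k C) :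
    η (phiMap e ξ) = ξ (rarrowMap e η) := by
  have pairing : ∀ t : C ⊗[k] C,
      η (TensorProduct.rid k C (lTensor C ξ t)) = ξ (TensorProduct.lid k C (rTensor C η t)) := by
    intro t
    induction t using TensorProduct.induction_on with
    | zero => simp
    | tmul c d => simp [mul_comm]
    | add x y hx hy => simp [hx, hy]
  simpa [phiMap, rarrowMap] using pairing (Coalgebra.comul e)

theorem Module.Dual.injective_of_surjective_transpose {R M : Type*} [CommRing R]
    [AddCommGroup M] [Module R M] {f g : Module.Dual R M →ₗ[R] M}
    (hfg : ∀ ξ η : Module.Dual R M, η (f ξ) = ξ (g η)) (hf : Function.Surjective f) :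
    Function.Injective g := by
  intro η η' hη
  ext x
  obtain ⟨ξ, rfl⟩ := hf x
  rw [hfg, hfg, hη]

theorem phiMap_surjective_iff_rarrowMap_surjective {k C : Type*} [Field k] [AddCommGroup C]
    [Module k C] [Coalgebra k C] [FiniteDimensional k C] (e : C) :
    Function.Surjective (phiMap (k := k) e) ↔ Function.Surjective (rarrowMap (k := k) e) := by
  have injective_iff_surjective {f : Module.Dual k C →ₗ[k] C} :
      Function.Injective f ↔ Function.Surjective f :=
    injective_iff_surjective_of_finrank_eq_finrank Subspace.dual_finrank_eq
  have transpose := apply_phiMap_eq_apply_rarrowMap (k := k) e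
  exact ⟨fun h => injective_iff_surjective.1
      (Module.Dual.injective_of_surjective_transpose transpose h),
    fun h => injective_iff_surjective.1
      (Module.Dual.injective_of_surjective_transpose (fun η ξ => (transpose ξ η).symm) h)⟩

theorem frobenius_element_left_iff_right
    {k C A : Type*} [Field k] [Ring A] [Algebra k A]
    [AddCommGroup C] [Module k C] [Coalgebra k C] [FiniteDimensional k C]
    (E : Entwining k A C) :
    (∃ e : C, Function.Surjective (phiMap (k := k) e) ∧
      ∀ a : A, E.psi (e ⊗ₜ[k] a) = a ⊗ₜ[k] e)
    ↔
    (∃ e : C, Function.Surjective (rarrowMap (k := k) e) ∧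
      ∀ a : A, E.psi (e ⊗ₜ[k] a) = a ⊗ₜ[k] e) :=
  exists_congr fun e => and_congr_left' (phiMap_surjective_iff_rarrowMap_surjective e)
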